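/- No monitor both soundly and completely rejection-monitors the server ā.nil + b.nil: there is no monitor m such that (for all q, rej(q,m) implies ā.nil + b.nil ⋢ q) and (for all q, ā.nil + b.nil ⋢ q implies rej(q,m)). -/

import Mathlib

/-- Actions: names and co-names. -/
inductive Act : Type where
  | pos : Nat → Act
  | neg : Nat → Act
deriving DecidableEq

/-- Complementation (dual) of actions. -/
def Act.dual : Act → Act
  | .pos n => .neg n
  | .neg n => .pos n

/-- Server contracts. -/
inductive Srv : Type where
  | nil : Srv
  | pre : Act → Srv → Srv
  | ext : Srv → Srv → Srv
  | int : Srv → Srv → Srv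
deriving DecidableEq

/-- Client contracts (additionally with success `ok`). -/
inductive Cli : Type where
  | nil : Cli
  | ok : Cli
  | pre : Act → Cli → Cli
  | ext : Cli → Cli → Cli
  | int : Cli → Cli → Cli
deriving DecidableEq

/-- Server LTS; label `none` is the silent action τ. -/
inductive SStep : Srv → Option Act → Srv → Prop where
  | pre : ∀ (a : Act) (p : Srv), SStep (.pre a p) (some a) p
  | extL : ∀ {p ℓ p'} (q : Srv), SStep p ℓ p' → SStep (.ext p q) ℓ p'
  | extR : ∀ {q ℓ q'} (p : Srv), SStep q ℓ q' → SStep (.ext p q) ℓ q'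
  | intL : ∀ (p q : Srv), SStep (.int p q) none p
  | intR : ∀ (p q : Srv), SStep (.int p q) none q

/-- Client LTS; label `none` is τ.  `ok` and `nil` have no transitions. -/
inductive CStep : Cli → Option Act → Cli → Prop where
  | pre : ∀ (a : Act) (r : Cli), CStep (.pre a r) (some a) r
  | extL : ∀ {r ℓ r'} (s : Cli), CStep r ℓ r' → CStep (.ext r s) ℓ r'
  | extR : ∀ {s ℓ s'} (r : Cli), CStep s ℓ s' → CStep (.ext r s) ℓ s'
  | intL : ∀ (r s : Cli), CStep (.int r s) none r
  | intR : ∀ (r s : Cli), CStep (.int r s) none s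

/-- System τ-transitions for a client-server system `r ∥ p`. -/
inductive SysStep : Cli × Srv → Cli × Srv → Prop where
  | srv : ∀ {p p'} (r : Cli), SStep p none p' → SysStep (r, p) (r, p')
  | cli : ∀ {r r'} (p : Srv), CStep r none r' → SysStep (r, p) (r', p)
  | syn : ∀ {r r' p p' a}, CStep r (some (Act.dual a)) r' → SStep p (some a) p' →
      SysStep (r, p) (r', p')

/-- `Sat p r`: every maximal computation from `r ∥ p` is successful. -/
def Sat (p : Srv) (r : Cli) : Prop :=
  ∀ s q, Relation.ReflTransGen SysStep (r, p) (s, q) →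
    (¬ ∃ x, SysStep (s, q) x) → s = Cli.ok

/-- The server (subcontract) preorder. -/
def SrvPre (p q : Srv) : Prop := ∀ r, Sat p r → Sat q r

/-- Monitor verdicts: acceptance, rejection, inconclusive. -/
inductive Verd : Type where
  | yes : Verd
  | no : Verd
  | stp : Verd
deriving DecidableEq

/-- Monitors. -/
inductive Mon : Type where
  | verd : Verd → Mon
  | act : Act → Mon → Mon
  | nact : Act → Mon → Mon
  | choice : Mon → Mon → Mon
  | conj : Mon → Mon → Mon
deriving DecidableEq

/-- Monitor LTS (on visible actions only); verdicts persist. -/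
inductive MStep : Mon → Act → Mon → Prop where
  | verd : ∀ (v : Verd) (a : Act), MStep (.verd v) a (.verd v)
  | act : ∀ (a : Act) (m : Mon), MStep (.act a m) a m
  | nact : ∀ {b a : Act} (m : Mon), b ≠ a → MStep (.nact a m) b m
  | chL : ∀ {m a m'} (n : Mon), MStep m a m' → MStep (.choice m n) a m'
  | chR : ∀ {n a n'} (m : Mon), MStep n a n' → MStep (.choice m n) a n'
  | conj : ∀ {m a m' n n'}, MStep m a m' → MStep n a n' →
      MStep (.conj m n) a (.conj m' n')

/-- Instrumentation of a monitor over a server: `m ◁ p`. -/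
inductive IStep : Mon × Srv → Option Act → Mon × Srv → Prop where
  | mon : ∀ {m p a m' p'}, SStep p (some a) p' → MStep m a m' →
      IStep (m, p) (some a) (m', p')
  | ter : ∀ {m p a p'}, SStep p (some a) p' → (¬ ∃ m', MStep m a m') →
      IStep (m, p) (some a) (.verd .stp, p')
  | asy : ∀ {p p'} (m : Mon), SStep p none p' → IStep (m, p) none (m, p')

/-- Reachability along monitored computations. -/
def IReach : Mon × Srv → Mon × Srv → Prop :=
  Relation.ReflTransGen (fun x y => ∃ ℓ, IStep x ℓ y)

/-- Rejecting monitor states: conjunctions `no × ⋯ × no` (incl. the single `no`). -/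
inductive IsRej : Mon → Prop where
  | no : IsRej (.verd .no)
  | conj : ∀ {m n}, IsRej m → IsRej n → IsRej (.conj m n)

/-- `Rej p m`: some monitored computation from `m ◁ p` reaches a rejecting state. -/
def Rej (p : Srv) (m : Mon) : Prop :=
  ∃ m' p', IReach (m, p) (m', p') ∧ IsRej m'

/-- Monitor synthesis from a server specification. -/
def synth : Srv → Mon
  | .nil => .verd .stp
  | .pre a p => .choice (.nact a (.verd .no)) (.act a (synth p))
  | .ext p q => .conj (synth p) (synth q)
  | .int p q => .conj (synth p) (synth q)

/-- Traces (finite sequences of visible actions) of a server. -/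
inductive STrace : Srv → List Act → Prop where
  | nil : ∀ (p : Srv), STrace p []
  | tau : ∀ {p p' t}, SStep p none p' → STrace p' t → STrace p t
  | act : ∀ {p a p' t}, SStep p (some a) p' → STrace p' t → STrace p (a :: t)

/-- Traces of a monitored system. -/
inductive ITrace : Mon × Srv → List Act → Prop where
  | nil : ∀ (x : Mon × Srv), ITrace x []
  | tau : ∀ {x y t}, IStep x none y → ITrace y t → ITrace x t
  | act : ∀ {x a y t}, IStep x (some a) y → ITrace y t → ITrace x (a :: t)

/-- Weak visible transition: τ-steps followed by a visible action. -/
def WAct (p : Srv) (a : Act) (p' : Srv) : Prop :=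
  ∃ p₀, Relation.ReflTransGen (fun x y => SStep x none y) p p₀ ∧ SStep p₀ (some a) p'

/-!
A complete monitor must reject `ā.nil`, which fails the client `b̄.ok` that `ā.nil + b.nil`
satisfies. Every monitored run of `ā.nil` is also a run of `ā.nil + b.nil`, so the monitor then
rejects `ā.nil + b.nil` itself, and soundness contradicts the reflexivity of `⊑`.
-/

theorem SrvPre.refl (p : Srv) : SrvPre p p := fun _ h => h

theorem IStep.ext_left {m : Mon} {q : Srv} {ℓ : Option Act} {x : Mon × Srv} (s : Srv)
    (h : IStep (m, q) ℓ x) : IStep (m, .ext q s) ℓ x := by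
  cases h with
  | mon hs hm => exact .mon (.extL s hs) hm
  | ter hs hn => exact .ter (.extL s hs) hn
  | asy _ hs => exact .asy _ (.extL s hs)

theorem Rej.ext_left {q : Srv} {m : Mon} (s : Srv) (h : Rej q m) : Rej (.ext q s) m := by
  obtain ⟨m', q', hreach, hrej⟩ := h
  rcases hreach.cases_head with heq | ⟨x, ⟨ℓ, hstep⟩, hrest⟩
  · obtain ⟨rfl, rfl⟩ := Prod.mk.inj heq
    exact ⟨m, .ext q s, .refl, hrej⟩
  · exact ⟨m', q', .head ⟨ℓ, hstep.ext_left s⟩ hrest, hrej⟩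

theorem CStep.pre_ok_eq {c : Act} {ℓ : Option Act} {r : Cli} (h : CStep (.pre c .ok) ℓ r) :
    r = .ok := by
  cases h
  rfl

theorem SStep.not_ext_pre_tau {a b : Act} {p q p' : Srv} :
    ¬ SStep (.ext (.pre a p) (.pre b q)) none p' := by
  intro h
  cases h with
  | extL _ h => cases h
  | extR _ h => cases h

theorem SysStep.fst_eq_ok {x y : Cli × Srv} (h : SysStep x y) (hx : x.1 = .ok) : y.1 = .ok := by
  cases h with
  | srv _ _ => exact hx
  | cli _ hc => obtain rfl := hx; cases hc
  | syn hc _ => obtain rfl := hx; cases hc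

theorem SysStep.fst_eq_ok_of_reach {x y : Cli × Srv} (h : Relation.ReflTransGen SysStep x y)
    (hx : x.1 = .ok) : y.1 = .ok := by
  induction h with
  | refl => exact hx
  | tail _ hstep ih => exact hstep.fst_eq_ok ih

theorem sat_ext_pre_pre_dual (a b : Act) (p q : Srv) :
    Sat (.ext (.pre a p) (.pre b q)) (.pre b.dual .ok) := by
  intro s q' hreach hstuck
  rcases hreach.cases_head with heq | ⟨x, hstep, hrest⟩
  · obtain ⟨rfl, rfl⟩ := Prod.mk.inj heq.symm
    exact (hstuck ⟨_, .syn (.pre b.dual .ok) (.extR _ (.pre b q))⟩).elim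
  · have hx : x.1 = .ok := by
      cases hstep with
      | srv _ hs => exact (SStep.not_ext_pre_tau hs).elim
      | cli _ hc => cases hc
      | syn hc _ => exact hc.pre_ok_eq
    exact SysStep.fst_eq_ok_of_reach hrest hx

theorem not_sat_pre_pre {a c : Act} (p : Srv) (r : Cli) (hc : c ≠ a.dual) :
    ¬ Sat (.pre a p) (.pre c r) := by
  intro hsat
  refine Cli.noConfusion (hsat _ _ .refl ?_)
  rintro ⟨_, hstep⟩
  cases hstep with
  | srv _ hs => cases hs
  | cli _ hc' => cases hc'
  | syn hc' hs => cases hs; cases hc'; exact hc rfl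

/-- No monitor both soundly and completely rejection-monitors `ā.nil + b.nil`. -/
theorem not_rejection_monitorable :
    ¬ ∃ m : Mon,
      (∀ q : Srv, Rej q m → ¬ SrvPre (.ext (.pre (.neg 0) .nil) (.pre (.pos 1) .nil)) q)
      ∧
      (∀ q : Srv, ¬ SrvPre (.ext (.pre (.neg 0) .nil) (.pre (.pos 1) .nil)) q → Rej q m) := by
  rintro ⟨m, hsound, hcomplete⟩
  have hnot : ¬ SrvPre (.ext (.pre (.neg 0) .nil) (.pre (.pos 1) .nil)) (.pre (.neg 0) .nil) :=
    fun h => not_sat_pre_pre .nil .ok (by decide) (h _ (sat_ext_pre_pre_dual _ (.pos 1) _ _))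
  exact hsound _ ((hcomplete _ hnot).ext_left _) (SrvPre.refl _)
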